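/- arXiv:2304.10763 — 4 statements merged into one kernel-verified Lean document; each statement's English description precedes it below -/
import Mathlib

section
/- Let X be a geodesic metric space and Γ a discrete group of isometries of X acting with codiameter at most D₀ (i.e. diam(Γ\X) ≤ D₀). If Γ' is a normal subgroup of Γ of index [Γ : Γ'] ≤ J, then Γ' acts with codiameter at most 2D₀(J+1). -/
/-- A geodesic metric space: any two points are joined by a geodesic segment. -/
def IsGeodesicSpace (X : Type*) [MetricSpace X] : Prop :=
  ∀ x y : X, ∃ c : ℝ → X, c 0 = x ∧ c (dist x y) = y ∧
    ∀ s t : ℝ, s ∈ Set.Icc 0 (dist x y) → t ∈ Set.Icc 0 (dist x y) →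
      dist (c s) (c t) = |s - t|

/-- A set `S` of elements of a group `G` acting on `X` has codiameter at most `D`:
every point of `X` lies within distance (arbitrarily close to) `D` of the `S`-orbit of any
point, i.e. the quotient has diameter at most `D`. -/
def CodiamLE (X : Type*) [MetricSpace X] {G : Type*} [Group G] [MulAction G X]
    (S : Set G) (D : ℝ) : Prop :=
  ∀ x y : X, ∀ ε : ℝ, 0 < ε → ∃ g ∈ S, dist y (g • x) ≤ D + ε

/-! The distance `F = d(·, Γ' x)` to a `Γ'`-orbit is 1-Lipschitz and `Γ'`-invariant, so on
the `Γ`-orbit of `x` it takes at most `[Γ : Γ']` values, one per coset. Along a geodesic from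
`x` to `y`, `F` takes every value in `[0, F y]`, and each of them is within `D₀` of some
`F (g x)`. Hence `[0, F y]` is covered by `[Γ : Γ']` intervals of length `2 D₀`, and
`F y ≤ 2 D₀ [Γ : Γ']`. -/

open Metric MeasureTheory

theorem IsGeodesicSpace.Icc_subset_range {X : Type*} [MetricSpace X] (hX : IsGeodesicSpace X)
    {f : X → ℝ} (hf : Continuous f) (x y : X) : Set.Icc (f x) (f y) ⊆ Set.range f := by
  obtain ⟨c, hc0, hcd, hc⟩ := hX x y
  have hc_cont : ContinuousOn c (Set.Icc 0 (dist x y)) :=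
    (LipschitzOnWith.of_dist_le_mul (K := 1) fun s hs t ht => by
      simp [hc s t hs ht, Real.dist_eq]).continuousOn
  intro t ht
  rw [← hc0, ← hcd] at ht
  obtain ⟨s, -, rfl⟩ := intermediate_value_Icc dist_nonneg (hf.comp_continuousOn hc_cont) ht
  exact ⟨c s, rfl⟩

theorem Real.sub_le_two_mul_mul_card_of_Icc_subset_iUnion_closedBall {ι : Type*} [Finite ι]
    {a b r : ℝ} (hr : 0 ≤ r) (v : ι → ℝ) (h : Set.Icc a b ⊆ ⋃ i, closedBall (v i) r) :
    b - a ≤ 2 * r * Nat.card ι := by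
  have := Fintype.ofFinite ι
  have hvol : ENNReal.ofReal (b - a) ≤ ENNReal.ofReal (2 * r * Nat.card ι) :=
    calc ENNReal.ofReal (b - a) = volume (Set.Icc a b) := (Real.volume_Icc).symm
      _ ≤ ∑ i, volume (closedBall (v i) r) :=
        (measure_mono h).trans (measure_iUnion_fintype_le _ _)
      _ = ENNReal.ofReal (2 * r * Nat.card ι) := by
        simp [Real.volume_closedBall, Nat.card_eq_fintype_card, mul_comm,
          ENNReal.ofReal_mul (Nat.cast_nonneg _)]
  exact (ENNReal.ofReal_le_ofReal_iff (by positivity)).1 hvol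

theorem CodiamLE.mono {X : Type*} [MetricSpace X] {G : Type*} [Group G] [MulAction G X]
    {S : Set G} {D D' : ℝ} (h : CodiamLE X S D) (hD : D ≤ D') : CodiamLE X S D' :=
  fun x y ε hε => (h x y ε hε).imp fun _ ⟨hg, hdist⟩ => ⟨hg, by linarith⟩

theorem infDist_smul_orbit {X : Type*} [MetricSpace X] {G : Type*} [Group G] [MulAction G X]
    (hiso : ∀ g : G, Isometry (fun x : X => g • x)) (g : G) (u x : X) :
    infDist (g • u) (MulAction.orbit G x) = infDist u (MulAction.orbit G x) := by
  conv_lhs => rw [← MulAction.smul_orbit g x, ← Set.image_smul]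
  exact infDist_image (hiso g)

theorem CodiamLE.subgroup {X : Type*} [MetricSpace X] (hX : IsGeodesicSpace X)
    {G : Type*} [Group G] [MulAction G X] (hiso : ∀ g : G, Isometry (fun x : X => g • x))
    {D : ℝ} (hD : 0 ≤ D) (h : CodiamLE X (Set.univ : Set G) D)
    (H : Subgroup G) [H.FiniteIndex] :
    CodiamLE X (H : Set G) (2 * D * H.index) := by
  intro x y ε hε
  set F : X → ℝ := fun u => infDist u (MulAction.orbit (↥H) x)
  have hF_lip : LipschitzWith 1 F := lipschitz_infDist_pt _
  have hF_x : F x = 0 := infDist_zero_of_mem (MulAction.mem_orbit_self x)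
  -- `F (g • x)` depends only on the right coset `H g`, encoded as the left coset `g⁻¹ H`.
  have hF_coset (g : G) : F (g • x) = F ((QuotientGroup.mk g⁻¹ : G ⧸ H).out⁻¹ • x) := by
    obtain ⟨γ, hγ⟩ := QuotientGroup.mk_out_eq_mul H g⁻¹
    rw [hγ, mul_inv_rev, inv_inv, mul_smul]
    exact (infDist_smul_orbit (fun γ : H => hiso γ) γ⁻¹ (g • x) x).symm
  have hF_y : F y ≤ 2 * D * H.index := by
    have hn : (0 : ℝ) < H.index := Nat.cast_pos.2 (Nat.pos_of_ne_zero H.index_ne_zero_of_finite)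
    refine le_of_forall_pos_le_add fun δ hδ => ?_
    have hcover : Set.Icc (F x) (F y) ⊆
        ⋃ q : G ⧸ H, closedBall (F (q.out⁻¹ • x)) (D + δ / (2 * H.index)) := by
      intro t ht
      obtain ⟨u, rfl⟩ := hX.Icc_subset_range hF_lip.continuous x y ht
      obtain ⟨g, -, hg⟩ := h x u (δ / (2 * H.index)) (by positivity)
      refine Set.mem_iUnion.2 ⟨QuotientGroup.mk g⁻¹, ?_⟩
      rw [mem_closedBall, ← hF_coset]
      have hF_ug := hF_lip.dist_le_mul u (g • x)
      rw [NNReal.coe_one, one_mul] at hF_ug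
      exact hF_ug.trans hg
    have hlen :=
      Real.sub_le_two_mul_mul_card_of_Icc_subset_iUnion_closedBall (by positivity) _ hcover
    rw [hF_x, sub_zero] at hlen
    calc F y ≤ 2 * (D + δ / (2 * H.index)) * H.index := hlen
      _ = 2 * D * H.index + δ := by field_simp
  obtain ⟨p, ⟨γ, rfl⟩, hp⟩ := (infDist_lt_iff (MulAction.nonempty_orbit x)).1
    (hF_y.trans_lt (lt_add_of_pos_right _ hε))
  exact ⟨γ, γ.2, hp.le⟩

theorem stmt0_general {X : Type*} [MetricSpace X] (hgeo : IsGeodesicSpace X)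
    {G : Type*} [Group G] [MulAction G X]
    (hiso : ∀ g : G, Isometry (fun x : X => g • x))
    {D₀ : ℝ} (hD₀ : 0 ≤ D₀)
    (hcodiam : CodiamLE X (Set.univ : Set G) D₀)
    {Γ' : Subgroup G} {J : ℕ}
    (hfin : Γ'.FiniteIndex) (hJ : Γ'.index ≤ J) :
    CodiamLE X (Γ' : Set G) (2 * D₀ * (J + 1)) := by
  refine (hcodiam.subgroup hgeo hiso hD₀ Γ').mono ?_
  gcongr
  exact_mod_cast hJ.trans J.le_succ

/-- If a discrete group `Γ` of isometries of a geodesic space `X` acts with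
codiameter at most `D₀`, and `Γ'` is a normal subgroup of index at most `J`, then `Γ'` acts
with codiameter at most `2·D₀·(J+1)`. -/
theorem stmt0 {X : Type*} [MetricSpace X] (hgeo : IsGeodesicSpace X)
    {G : Type*} [Group G] [MulAction G X]
    (hiso : ∀ g : G, Isometry (fun x : X => g • x))
    (hdisc : ∀ (x : X) (r : ℝ), {g : G | dist (g • x) x ≤ r}.Finite)
    {D₀ : ℝ} (hD₀ : 0 ≤ D₀)
    (hcodiam : CodiamLE X (Set.univ : Set G) D₀)
    {Γ' : Subgroup G} (hnorm : Γ'.Normal) {J : ℕ}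
    (hfin : Γ'.FiniteIndex) (hJ : Γ'.index ≤ J) :
    CodiamLE X (Γ' : Set G) (2 * D₀ * (J + 1)) :=
  stmt0_general hgeo hiso hD₀ hcodiam hfin hJ
end

section
/- Let G be a group with finite symmetric generating set S containing the identity, acting on its Cayley graph Cay(G,S). If G' is a normal subgroup of G with index [G : G'] ≤ J, then G' is generated by the set of its elements of word length at most 4J+2 with respect to S. -/
/-!
Write an element of `G'` as a word in `S`. If the word is longer than `2 [G : G']`, two of its
first `[G : G'] + 1` prefixes, `p_a` and `p_b` with `a < b`, lie in the same right coset of `G'`.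
Then `p_b p_a⁻¹ ∈ G'` has word length at most `a + b < 2 [G : G']`, and deleting letters
`a + 1, …, b` leaves a shorter word whose product is `(p_b p_a⁻¹)⁻¹` times the original one, hence
again in `G'`. Induction on the length of the word.
-/

def wordBall {G : Type*} [Monoid G] (S : Set G) (n : ℕ) : Set G :=
  {g | ∃ l : List G, l.length ≤ n ∧ (∀ s ∈ l, s ∈ S) ∧ l.prod = g}

section

variable {G : Type*} [Group G] {S : Set G}

theorem wordBall_mono {m n : ℕ} (hmn : m ≤ n) : wordBall S m ⊆ wordBall S n :=
  fun _ ⟨l, hl, hlS, hprod⟩ => ⟨l, hl.trans hmn, hlS, hprod⟩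

theorem prod_take_mem_wordBall {l : List G} (hl : ∀ s ∈ l, s ∈ S) (n : ℕ) :
    (l.take n).prod ∈ wordBall S n :=
  ⟨l.take n, List.length_take_le n l, fun s hs => hl s (List.take_subset n l hs), rfl⟩

theorem mul_inv_mem_wordBall (hS : S⁻¹ ⊆ S) {g h : G} {m n : ℕ} (hg : g ∈ wordBall S m)
    (hh : h ∈ wordBall S n) : g * h⁻¹ ∈ wordBall S (m + n) := by
  obtain ⟨u, hu, huS, rfl⟩ := hg
  obtain ⟨v, hv, hvS, rfl⟩ := hh
  refine ⟨u ++ (v.map (·⁻¹)).reverse, ?_, ?_, by rw [List.prod_append, List.prod_inv_reverse]⟩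
  · simp only [List.length_append, List.length_reverse, List.length_map]
    omega
  · simp only [List.mem_append, List.mem_reverse, List.mem_map]
    rintro s (hs | ⟨t, ht, rfl⟩)
    exacts [huS s hs, hS (Set.inv_mem_inv.mpr (hvS t ht))]

theorem exists_list_prod_eq_of_closure_eq_top (hS : S⁻¹ ⊆ S) (hgen : Subgroup.closure S = ⊤)
    (g : G) : ∃ l : List G, (∀ s ∈ l, s ∈ S) ∧ l.prod = g := by
  have hg : g ∈ (Subgroup.closure S).toSubmonoid := hgen ▸ Subgroup.mem_top g
  rw [Subgroup.closure_toSubmonoid, Set.union_eq_left.mpr hS] at hg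
  exact Submonoid.exists_list_of_mem_closure hg

theorem Subgroup.exists_prod_take_mul_inv_mem (H : Subgroup G) [H.FiniteIndex] (l : List G) :
    ∃ a b, a < b ∧ b ≤ H.index ∧ (l.take b).prod * ((l.take a).prod)⁻¹ ∈ H := by
  have : Fintype (G ⧸ H) := Fintype.ofFinite _
  -- the left coset of `p⁻¹` determines the right coset of `p`
  let coset (i : Fin (H.index + 1)) : G ⧸ H := QuotientGroup.mk ((l.take i).prod)⁻¹
  obtain ⟨i, j, hij, hcoset⟩ := Fintype.exists_ne_map_eq_of_card_lt coset
    (by rw [Fintype.card_fin, ← Nat.card_eq_fintype_card, ← H.index_eq_card]; omega)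
  have hmem {a b : Fin (H.index + 1)} (h : coset a = coset b) :
      (l.take b).prod * ((l.take a).prod)⁻¹ ∈ H := by
    rw [← H.inv_mem_iff]
    simpa [coset, QuotientGroup.eq] using h
  rcases Fin.lt_or_lt_of_ne hij with h | h
  · exact ⟨i, j, h, j.is_le, hmem hcoset⟩
  · exact ⟨j, i, h, i.is_le, hmem hcoset.symm⟩

theorem Subgroup.prod_mem_closure_inter_wordBall (hS : S⁻¹ ⊆ S) (H : Subgroup G)
    [H.FiniteIndex] (l : List G) (hl : ∀ s ∈ l, s ∈ S) (hmem : l.prod ∈ H) :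
    l.prod ∈ Subgroup.closure (H ∩ wordBall S (2 * H.index)) := by
  by_cases hshort : l.length ≤ 2 * H.index
  · exact Subgroup.subset_closure ⟨hmem, l, hshort, hl, rfl⟩
  obtain ⟨a, b, hab, hb, hcut⟩ := H.exists_prod_take_mul_inv_mem l
  set cut := (l.take b).prod * ((l.take a).prod)⁻¹
  have hcut_ball : cut ∈ wordBall S (2 * H.index) :=
    wordBall_mono (by omega)
      (mul_inv_mem_wordBall hS (prod_take_mem_wordBall hl b) (prod_take_mem_wordBall hl a))
  have hsplit : l.prod = cut * (l.take a ++ l.drop b).prod := by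
    rw [List.prod_append, ← List.prod_take_mul_prod_drop l b, ← mul_assoc,
      inv_mul_cancel_right]
  have hshorter : (l.take a ++ l.drop b).length < l.length := by
    simp only [List.length_append, List.length_take, List.length_drop]
    omega
  have hrest_mem : (l.take a ++ l.drop b).prod ∈ H := by
    rwa [hsplit, H.mul_mem_cancel_left hcut] at hmem
  have hrest_letters : ∀ s ∈ l.take a ++ l.drop b, s ∈ S := by
    simp only [List.mem_append]
    rintro s (hs | hs)
    exacts [hl s (List.take_subset a l hs), hl s (List.drop_subset b l hs)]
  rw [hsplit]
  exact mul_mem (Subgroup.subset_closure ⟨hcut, hcut_ball⟩)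
    (H.prod_mem_closure_inter_wordBall hS _ hrest_letters hrest_mem)
termination_by l.length

theorem Subgroup.closure_inter_wordBall_eq (hS : S⁻¹ ⊆ S) (hgen : Subgroup.closure S = ⊤)
    (H : Subgroup G) [H.FiniteIndex] {n : ℕ} (hn : 2 * H.index ≤ n) :
    Subgroup.closure (H ∩ wordBall S n) = H := by
  refine le_antisymm ((Subgroup.closure_le H).mpr Set.inter_subset_left) fun g hg => ?_
  obtain ⟨l, hl, rfl⟩ := exists_list_prod_eq_of_closure_eq_top hS hgen g
  exact Subgroup.closure_mono (Set.inter_subset_inter_right _ (wordBall_mono hn))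
    (H.prod_mem_closure_inter_wordBall hS l hl hg)

end

theorem stmt1_general {G : Type*} [Group G] (S : Set G)
    (hsymm : S⁻¹ = S) (hgen : Subgroup.closure S = ⊤)
    (G' : Subgroup G) {J : ℕ}
    (hfinidx : G'.FiniteIndex) (hJ : G'.index ≤ J) :
    Subgroup.closure {g : G | g ∈ G' ∧ ∃ l : List G, l.length ≤ 4 * J + 2 ∧
      (∀ s ∈ l, s ∈ S) ∧ l.prod = g} = G' :=
  G'.closure_inter_wordBall_eq hsymm.le hgen (by omega)

/-- If `G` has a finite symmetric generating set `S` containing the identity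
and `G'` is a normal subgroup of index at most `J`, then `G'` is generated by its elements of
word length at most `4J+2` with respect to `S`. -/
theorem stmt1 {G : Type*} [Group G] (S : Set G) (hfin : S.Finite)
    (hsymm : S⁻¹ = S) (hone : (1 : G) ∈ S) (hgen : Subgroup.closure S = ⊤)
    (G' : Subgroup G) (hnorm : G'.Normal) {J : ℕ}
    (hfinidx : G'.FiniteIndex) (hJ : G'.index ≤ J) :
    Subgroup.closure {g : G | g ∈ G' ∧ ∃ l : List G, l.length ≤ 4 * J + 2 ∧
      (∀ s ∈ l, s ∈ S) ∧ l.prod = g} = G' :=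
  stmt1_general S hsymm hgen G' hfinidx hJ
end

section
/- Let G be a crystallographic group of ℝ^k, let J be a bound on the index of the translation lattice 𝓛(G) = G ∩ Transl(ℝ^k) in G, and set r_k := √(2 sin(π/J)). If 0 < r < r_k and g ∈ G moves every point of the open ball B(O, 1/r) by less than r, then g is a translation. -/
/-!
Write `g x = A x + g 0` with `A` the linear part of `g`. Some power `g ^ n` with `0 < n ≤ J`
lies in the translation lattice, so `A ^ n = 1`. If `A ≠ 1`, an eigenvector `v` of the
symmetric map `A + A⁻¹` that `A` does not fix spans with `A v` a plane on which `A` rotates by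
an angle `θ ∈ (0, π]`; `cos (n θ) = 1` forces `θ ≥ 2π / J`, hence `‖A v - v‖ ≥ 2 sin (π / J)`
for unit `v`. On the other hand, comparing the displacements of `p` and `-p` cancels the
translation part `g 0`, so `‖A p - p‖ < r` whenever `‖p‖ < 1 / r`, and scaling gives
`‖A v - v‖ ≤ r² < 2 sin (π / J)`.
-/

/-- An isometry of Euclidean space is a translation if it is of the form `x ↦ x + v`. -/
def IsTranslation {k : ℕ}
    (f : EuclideanSpace ℝ (Fin k) ≃ᵢ EuclideanSpace ℝ (Fin k)) : Prop :=
  ∃ v : EuclideanSpace ℝ (Fin k), ∀ x : EuclideanSpace ℝ (Fin k), f x = x + v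

open Real RealInnerProductSpace

section

variable {E F : Type*} [SeminormedAddCommGroup E] [NormedSpace ℝ E]
  [SeminormedAddCommGroup F] [NormedSpace ℝ F]

lemma LinearMap.norm_apply_lt_of_forall_norm_apply_add_lt (L : E →ₗ[ℝ] F) (b : F) {R r : ℝ}
    (h : ∀ p, ‖p‖ < R → ‖L p + b‖ < r) {p : E} (hp : ‖p‖ < R) : ‖L p‖ < r := by
  have hneg : ‖L p - b‖ < r :=
    calc ‖L p - b‖ = ‖L (-p) + b‖ := by rw [map_neg, ← norm_neg]; congr 1; abel
      _ < r := h (-p) (by rwa [norm_neg])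
  have : ‖(2 : ℝ) • L p‖ ≤ ‖L p + b‖ + ‖L p - b‖ :=
    calc ‖(2 : ℝ) • L p‖ = ‖(L p + b) + (L p - b)‖ := by rw [two_smul]; congr 1; abel
      _ ≤ _ := norm_add_le _ _
  rw [norm_smul, Real.norm_two] at this
  linarith [h p hp]

lemma LinearMap.mul_norm_apply_le_of_forall_norm_apply_lt (L : E →ₗ[ℝ] F) {R r : ℝ} (hr : 0 ≤ r)
    (h : ∀ p, ‖p‖ < R → ‖L p‖ < r) (v : E) : R * ‖L v‖ ≤ r * ‖v‖ := by
  by_contra! hlt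
  have hLv : 0 < ‖L v‖ := by
    by_contra! h0
    rw [le_antisymm h0 (norm_nonneg _), mul_zero] at hlt
    linarith [mul_nonneg hr (norm_nonneg v)]
  set t := r / ‖L v‖
  have ht : 0 ≤ t := by positivity
  have hnorm : ‖t • v‖ < R := by
    rw [norm_smul, Real.norm_of_nonneg ht, div_mul_eq_mul_div, div_lt_iff₀ hLv]
    exact hlt
  have := h (t • v) hnorm
  rw [map_smul, norm_smul, Real.norm_of_nonneg ht, div_mul_cancel₀ _ hLv.ne'] at this
  exact lt_irrefl r this

end

lemma Real.two_pi_div_le_of_cos_mul_eq_one {θ : ℝ} {n : ℕ} (hθ : 0 < θ) (hn : 0 < n)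
    (h : cos (n * θ) = 1) : 2 * π / n ≤ θ := by
  obtain ⟨m, hm⟩ := (cos_eq_one_iff _).1 h
  have hm1 : (1 : ℝ) ≤ m := by
    have : (0 : ℝ) < m := by
      have : 0 < (m : ℝ) * (2 * π) := by rw [hm]; positivity
      exact pos_of_mul_pos_left this (by positivity)
    exact_mod_cast (show (0 : ℤ) < m by exact_mod_cast this)
  rw [div_le_iff₀ (by positivity), mul_comm θ, ← hm]
  nlinarith [pi_pos]

namespace LinearIsometryEquiv

variable {E : Type*} [NormedAddCommGroup E] [InnerProductSpace ℝ E]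

lemma inner_map_eq_inner_symm (A : E ≃ₗᵢ[ℝ] E) (x y : E) : ⟪A x, y⟫ = ⟪x, A.symm y⟫ := by
  rw [← A.inner_map_map x (A.symm y), A.apply_symm_apply]

lemma inner_pow_apply_self (A : E ≃ₗᵢ[ℝ] E) {v : E} {θ : ℝ}
    (hv : A v + A.symm v = (2 * cos θ) • v) (j : ℕ) :
    ⟪(A ^ j) v, v⟫ = cos (j * θ) * ‖v‖ ^ 2 := by
  induction j using Nat.twoStepInduction with
  | zero => simp
  | one =>
    have h := congrArg (⟪·, v⟫) hv
    simp only [inner_add_left, real_inner_smul_left, real_inner_self_eq_norm_sq] at h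
    rw [real_inner_comm v (A.symm v), ← inner_map_eq_inner_symm] at h
    simp only [pow_one, Nat.cast_one, one_mul]
    linarith
  | more j ih₀ ih₁ =>
    -- `⟪Aʲ v, v⟫` and `cos (j θ)` satisfy the same Chebyshev recurrence
    have hsymm : A.symm v = (2 * cos θ) • v - A v := eq_sub_of_add_eq' hv
    have hshift : ⟪(A ^ (j + 1)) v, A v⟫ = ⟪(A ^ j) v, v⟫ := by
      rw [pow_succ', coe_mul, Function.comp_apply, inner_map_map]
    have hcos : cos (((j + 2 : ℕ) : ℝ) * θ)
        = 2 * cos θ * cos (((j + 1 : ℕ) : ℝ) * θ) - cos (j * θ) := by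
      push_cast
      rw [show ((j : ℝ) + 2) * θ = (j + 1) * θ + θ by ring,
        show (j : ℝ) * θ = (j + 1) * θ - θ by ring, cos_add, cos_sub]
      ring
    rw [pow_succ', coe_mul, Function.comp_apply, inner_map_eq_inner_symm, hsymm,
      inner_sub_right, real_inner_smul_right, hshift, ih₀, ih₁, hcos]
    ring

variable [FiniteDimensional ℝ E]

lemma exists_add_symm_eq_two_cos_smul (A : E ≃ₗᵢ[ℝ] E) (hA : A ≠ 1) :
    ∃ v θ, ‖v‖ = 1 ∧ 0 < θ ∧ θ ≤ π ∧ A v + A.symm v = (2 * cos θ) • v := by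
  set S : E →ₗ[ℝ] E := (A : E →ₗ[ℝ] E) + (A.symm : E →ₗ[ℝ] E)
  have hS : S.IsSymmetric := fun x y => by
    change ⟪A x + A.symm x, y⟫ = ⟪x, A y + A.symm y⟫
    rw [inner_add_left, inner_add_right, inner_map_eq_inner_symm A,
      inner_map_eq_inner_symm A.symm, symm_symm, add_comm]
  set e := hS.eigenvectorBasis rfl
  obtain ⟨i, hi⟩ : ∃ i, A (e i) ≠ e i := by
    by_contra! hfix
    have : (A : E →ₗ[ℝ] E) = LinearMap.id := e.toBasis.ext fun i => by simpa using hfix i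
    exact hA (LinearIsometryEquiv.ext fun x => LinearMap.congr_fun this x)
  set v := e i
  set c := hS.eigenvalues rfl i
  have hv1 : ‖v‖ = 1 := e.norm_eq_one i
  have hSv : A v + A.symm v = c • v := hS.apply_eigenvectorBasis rfl i
  have hinner : ⟪A v, v⟫ = c / 2 := by
    have h := congrArg (⟪·, v⟫) hSv
    simp only [inner_add_left, real_inner_smul_left, real_inner_self_eq_norm_sq, hv1] at h
    rw [real_inner_comm v (A.symm v), ← inner_map_eq_inner_symm] at h
    linarith
  have hle : |c / 2| ≤ 1 := by
    simpa [hinner, hv1] using abs_real_inner_le_norm (A v) v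
  have hlt : c / 2 < 1 := by
    refine (abs_le.1 hle).2.lt_of_ne fun h => hi ?_
    rw [← sub_eq_zero, ← norm_eq_zero, ← sq_eq_zero_iff, norm_sub_sq_real, A.norm_map, hv1,
      hinner, h]
    norm_num
  refine ⟨v, arccos (c / 2), hv1, arccos_pos.2 hlt, arccos_le_pi _, ?_⟩
  rw [cos_arccos (abs_le.1 hle).1 hlt.le, mul_div_cancel₀ _ two_ne_zero]
  exact hSv

lemma exists_two_sin_pi_div_le_norm_apply_sub (A : E ≃ₗᵢ[ℝ] E) (hA : A ≠ 1) {n J : ℕ}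
    (hn : 0 < n) (hnJ : n ≤ J) (hAn : A ^ n = 1) :
    ∃ v, ‖v‖ = 1 ∧ 2 * sin (π / J) ≤ ‖A v - v‖ := by
  obtain ⟨v, θ, hv1, hθ0, hθπ, hv⟩ := A.exists_add_symm_eq_two_cos_smul hA
  have hcos : cos (n * θ) = 1 := by
    simpa [hAn, hv1] using (A.inner_pow_apply_self hv n).symm
  have hθ : 2 * π / J ≤ θ :=
    (div_le_div_of_nonneg_left (by positivity) (by exact_mod_cast hn)
      (by exact_mod_cast hnJ)).trans (two_pi_div_le_of_cos_mul_eq_one hθ0 hn hcos)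
  have hnorm : ‖A v - v‖ ^ 2 = 2 - 2 * cos θ := by
    have h1 := A.inner_pow_apply_self hv 1
    simp only [pow_one, Nat.cast_one, one_mul, hv1] at h1
    rw [norm_sub_sq_real, A.norm_map, hv1, h1]
    ring
  refine ⟨v, hv1, le_of_sq_le_sq ?_ (norm_nonneg _)⟩
  calc (2 * sin (π / J)) ^ 2 = 2 - 2 * cos (2 * (π / J)) := by rw [cos_two_mul, cos_sq']; ring
    _ ≤ 2 - 2 * cos θ := by
      rw [← mul_div_assoc]
      gcongr
      exact cos_le_cos_of_nonneg_of_le_pi (by positivity) hθπ hθ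
    _ = ‖A v - v‖ ^ 2 := hnorm.symm

end LinearIsometryEquiv

namespace IsometryEquiv

variable {E : Type*} [NormedAddCommGroup E] [NormedSpace ℝ E]

lemma toRealAffineIsometryEquiv_linearIsometryEquiv_apply (g : E ≃ᵢ E) (v : E) :
    g.toRealAffineIsometryEquiv.linearIsometryEquiv v = g v - g 0 := by
  have h := g.toRealAffineIsometryEquiv.map_vadd 0 v
  rw [vadd_eq_add, vadd_eq_add, add_zero, coeFn_toRealAffineIsometryEquiv] at h
  rw [h, add_sub_cancel_right]

noncomputable def linearPart : (E ≃ᵢ E) →* (E ≃ₗᵢ[ℝ] E) where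
  toFun g := g.toRealAffineIsometryEquiv.linearIsometryEquiv
  map_one' := by
    ext v
    simp [toRealAffineIsometryEquiv_linearIsometryEquiv_apply]
  map_mul' g h := by
    ext v
    simp only [toRealAffineIsometryEquiv_linearIsometryEquiv_apply, LinearIsometryEquiv.coe_mul,
      Function.comp_apply, map_sub, mul_apply]
    abel

lemma linearPart_apply (g : E ≃ᵢ E) (v : E) : linearPart g v = g v - g 0 :=
  toRealAffineIsometryEquiv_linearIsometryEquiv_apply g v

end IsometryEquiv

lemma isTranslation_iff_linearPart_eq_one {k : ℕ}
    (g : EuclideanSpace ℝ (Fin k) ≃ᵢ EuclideanSpace ℝ (Fin k)) :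
    IsTranslation g ↔ IsometryEquiv.linearPart g = 1 := by
  constructor
  · rintro ⟨w, hw⟩
    ext v
    simp [IsometryEquiv.linearPart_apply, hw]
  · intro h
    refine ⟨g 0, fun x => ?_⟩
    have := IsometryEquiv.linearPart_apply g x
    rw [h, LinearIsometryEquiv.coe_one, id_eq] at this
    exact (eq_sub_iff_add_eq.1 this).symm

theorem stmt3_general {k : ℕ}
    (G : Subgroup (EuclideanSpace ℝ (Fin k) ≃ᵢ EuclideanSpace ℝ (Fin k)))
    (T : Subgroup (EuclideanSpace ℝ (Fin k) ≃ᵢ EuclideanSpace ℝ (Fin k)))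
    (hT : ∀ f, f ∈ T ↔ IsTranslation f)
    {J : ℕ} (hidx : T.relIndex G ≤ J) (hne : T.relIndex G ≠ 0)
    {r : ℝ} (hr0 : 0 < r) (hrk : r < Real.sqrt (2 * Real.sin (Real.pi / J)))
    {g : EuclideanSpace ℝ (Fin k) ≃ᵢ EuclideanSpace ℝ (Fin k)} (hg : g ∈ G)
    (hmove : ∀ p : EuclideanSpace ℝ (Fin k), ‖p‖ < 1 / r → dist (g p) p < r) :
    IsTranslation g := by
  obtain ⟨n, hn, hnT, hgn⟩ := Subgroup.exists_pow_mem_of_relIndex_ne_zero hne hg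
  set A := IsometryEquiv.linearPart g
  have hAn : A ^ n = 1 := by
    rw [← map_pow, ← isTranslation_iff_linearPart_eq_one, ← hT]
    exact hgn.1
  rw [isTranslation_iff_linearPart_eq_one]
  by_contra hA
  obtain ⟨v, hv1, hv⟩ := A.exists_two_sin_pi_div_le_norm_apply_sub hA hn (hnT.trans hidx) hAn
  set L : EuclideanSpace ℝ (Fin k) →ₗ[ℝ] EuclideanSpace ℝ (Fin k) :=
    (A : EuclideanSpace ℝ (Fin k) →ₗ[ℝ] EuclideanSpace ℝ (Fin k)) - LinearMap.id
  have hball : ∀ p, ‖p‖ < 1 / r → ‖L p + g 0‖ < r := fun p hp => by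
    have hLp : L p + g 0 = g p - p := by
      change A p - p + g 0 = g p - p
      rw [IsometryEquiv.linearPart_apply]
      abel
    rw [hLp, ← dist_eq_norm]
    exact hmove p hp
  have hLv : 1 / r * ‖A v - v‖ ≤ r * ‖v‖ := L.mul_norm_apply_le_of_forall_norm_apply_lt hr0.le
    (fun p => L.norm_apply_lt_of_forall_norm_apply_add_lt (g 0) hball) v
  rw [hv1, mul_one, one_div, inv_mul_le_iff₀ hr0, ← sq] at hLv
  linarith [(lt_sqrt hr0.le).1 hrk]

/-- Let `G` be a crystallographic group of `ℝ^k` (a discrete cocompact group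
of isometries), `T` the full group of translations, and `J` a bound for the index of the
translation lattice `G ∩ T` in `G`.  Set `r_k := √(2 sin(π/J))`.  If `0 < r < r_k` and
`g ∈ G` moves every point of the ball `B(0, 1/r)` by less than `r`, then `g` is a
translation. -/
theorem stmt3 {k : ℕ}
    (G : Subgroup (EuclideanSpace ℝ (Fin k) ≃ᵢ EuclideanSpace ℝ (Fin k)))
    (hdisc : ∀ (x : EuclideanSpace ℝ (Fin k)) (r : ℝ),
      {g : G | dist ((g : EuclideanSpace ℝ (Fin k) ≃ᵢ EuclideanSpace ℝ (Fin k)) x) x ≤ r}.Finite)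
    (hcoc : ∃ D : ℝ, ∀ x y : EuclideanSpace ℝ (Fin k), ∃ g ∈ G, dist y (g x) ≤ D)
    (T : Subgroup (EuclideanSpace ℝ (Fin k) ≃ᵢ EuclideanSpace ℝ (Fin k)))
    (hT : ∀ f, f ∈ T ↔ IsTranslation f)
    {J : ℕ} (hidx : T.relIndex G ≤ J) (hne : T.relIndex G ≠ 0)
    {r : ℝ} (hr0 : 0 < r) (hrk : r < Real.sqrt (2 * Real.sin (Real.pi / J)))
    {g : EuclideanSpace ℝ (Fin k) ≃ᵢ EuclideanSpace ℝ (Fin k)} (hg : g ∈ G)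
    (hmove : ∀ p : EuclideanSpace ℝ (Fin k), ‖p‖ < 1 / r → dist (g p) p < r) :
    IsTranslation g :=
  stmt3_general G T hT hidx hne hr0 hrk hg hmove
end

section
/- Let X be a proper CAT(0) space and let G₀ < G be discrete, semisimple, virtually abelian groups of isometries of X. Then [G : G₀] is finite if and only if G and G₀ have the same abelian rank. -/
/-- A metric space is CAT(0) if midpoints exist and the CN-inequality of Bruhat–Tits holds. -/
def IsCAT0 (X : Type*) [MetricSpace X] : Prop :=
  (∀ x y : X, ∃ m : X, dist x m = dist x y / 2 ∧ dist m y = dist x y / 2) ∧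
  ∀ x y z m : X, dist y m = dist y z / 2 → dist m z = dist y z / 2 →
    dist x m ^ 2 ≤ (dist x y ^ 2 + dist x z ^ 2) / 2 - dist y z ^ 2 / 4

/-- A virtually abelian group has rank `k` if it contains a finite-index subgroup which is
free abelian of rank `k` (isomorphic to `ℤ^k`). -/
def HasRank (G : Type*) [Group G] (k : ℕ) : Prop :=
  ∃ A : Subgroup G, A.FiniteIndex ∧ Nonempty (↥A ≃* Multiplicative (Fin k → ℤ))

/-!
Both directions reduce to two facts about `ℤ^k` (Smith normal form): a subgroup of `ℤ^k` has
finite index iff it is itself isomorphic to `ℤ^k`, and `ℤ^a ≅ ℤ^b` forces `a = b`.  Passing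
between `G`, `G₀` and their free abelian finite-index subgroups through intersections, rank
becomes an invariant of finite-index subgroups, and a subgroup of full rank has finite index.
-/

theorem Subgroup.finiteIndex_iff_nonempty_mulEquiv {ι G : Type*} [Finite ι] [Group G]
    (φ : G ≃* Multiplicative (ι → ℤ)) (H : Subgroup G) :
    H.FiniteIndex ↔ Nonempty (H ≃* Multiplicative (ι → ℤ)) := by
  let F := MulEquiv.funMultiplicative ι ℤ
  let e := φ.trans F
  let eH := e.subgroupMap H
  rw [finiteIndex_iff, ← index_map_equiv H e, Int.subgroup_index_ne_zero_iff]
  exact ⟨fun ⟨f⟩ ↦ ⟨(eH.trans f).trans F.symm⟩, fun ⟨f⟩ ↦ ⟨(eH.symm.trans f).trans F⟩⟩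

theorem eq_of_mulEquiv_multiplicative_fin_int {a b : ℕ}
    (e : Multiplicative (Fin a → ℤ) ≃* Multiplicative (Fin b → ℤ)) : a = b := by
  simpa using card_eq_of_linearEquiv ℤ (MulEquiv.toAdditive e).toIntLinearEquiv

def Subgroup.subgroupOfEquivInf {G : Type*} [Group G] (H K : Subgroup G) :
    H.subgroupOf K ≃* ↥(H ⊓ K) :=
  (MulEquiv.subgroupCongr (inf_subgroupOf_right H K).symm).trans
    (subgroupOfEquivOfLe inf_le_right)

def Subgroup.subgroupOfCommEquiv {G : Type*} [Group G] (H K : Subgroup G) :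
    H.subgroupOf K ≃* K.subgroupOf H :=
  ((H.subgroupOfEquivInf K).trans (MulEquiv.subgroupCongr (inf_comm H K))).trans
    (K.subgroupOfEquivInf H).symm

namespace HasRank

variable {G G' : Type*} [Group G] [Group G'] {k m : ℕ}

theorem congr (e : G ≃* G') (h : HasRank G k) : HasRank G' k := by
  obtain ⟨A, hA, ⟨φ⟩⟩ := h
  exact ⟨A.map (e : G →* G'), ⟨(A.index_map_equiv e).symm ▸ hA.index_ne_zero⟩,
    ⟨(e.subgroupMap A).symm.trans φ⟩⟩

theorem of_finiteIndex (h : HasRank G k) (H : Subgroup G) [H.FiniteIndex] : HasRank H k := by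
  obtain ⟨A, hA, ⟨φ⟩⟩ := h
  obtain ⟨ψ⟩ := ((H.subgroupOf A).finiteIndex_iff_nonempty_mulEquiv φ).1 inferInstance
  exact ⟨A.subgroupOf H, inferInstance, ⟨(A.subgroupOfCommEquiv H).trans ψ⟩⟩

theorem eq_of_mulEquiv (h : HasRank G k) (φ : G ≃* Multiplicative (Fin m → ℤ)) : k = m := by
  obtain ⟨A, hA, ⟨ψ⟩⟩ := h
  obtain ⟨χ⟩ := (A.finiteIndex_iff_nonempty_mulEquiv φ).1 hA
  exact eq_of_mulEquiv_multiplicative_fin_int (ψ.symm.trans χ)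

theorem unique (h : HasRank G k) (h' : HasRank G m) : k = m := by
  obtain ⟨A, hA, ⟨φ⟩⟩ := h'
  exact (h.of_finiteIndex A).eq_of_mulEquiv φ

theorem finiteIndex_of_mulEquiv (φ : G ≃* Multiplicative (Fin k → ℤ)) {H : Subgroup G}
    (h : HasRank H k) : H.FiniteIndex := by
  obtain ⟨B, hB, ⟨ψ⟩⟩ := h
  have : (B.map H.subtype).FiniteIndex :=
    ((B.map H.subtype).finiteIndex_iff_nonempty_mulEquiv φ).2
      ⟨(B.equivMapOfInjective H.subtype H.subtype_injective).symm.trans ψ⟩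
  exact Subgroup.finiteIndex_of_le (Subgroup.map_subtype_le B)

theorem finiteIndex_of_subgroup (hG : HasRank G k) {H : Subgroup G} (hH : HasRank H k) :
    H.FiniteIndex := by
  obtain ⟨A, hA, ⟨φ⟩⟩ := hG
  have hHA : H.relIndex A ≠ 0 :=
    (finiteIndex_of_mulEquiv φ
      ((hH.of_finiteIndex (A.subgroupOf H)).congr (A.subgroupOfCommEquiv H))).index_ne_zero
  rw [Subgroup.finiteIndex_iff, ← Subgroup.relIndex_top_right] at hA ⊢
  exact Subgroup.relIndex_ne_zero_trans hHA hA

end HasRank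

theorem stmt5_general {G : Type*} [Group G] (G₀ : Subgroup G) {k k₀ : ℕ}
    (hG : HasRank G k) (hG₀ : HasRank ↥G₀ k₀) :
    G₀.FiniteIndex ↔ k = k₀ := by
  refine ⟨fun _ ↦ (hG.of_finiteIndex G₀).unique hG₀, ?_⟩
  rintro rfl
  exact hG.finiteIndex_of_subgroup hG₀

/-- Let `X` be a proper CAT(0) space and `G₀ < G` discrete, semisimple,
virtually abelian groups of isometries of `X`, of ranks `k` and `k₀` respectively.  Then
`[G : G₀]` is finite if and only if `k = k₀`. -/
theorem stmt5 {X : Type*} [MetricSpace X] [ProperSpace X] (hcat : IsCAT0 X)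
    {G : Type*} [Group G] [MulAction G X]
    (hiso : ∀ g : G, Isometry (fun x : X => g • x))
    (hfaith : ∀ g : G, (∀ x : X, g • x = x) → g = 1)
    (hdisc : ∀ (x : X) (r : ℝ), {g : G | dist (g • x) x ≤ r}.Finite)
    (hss : ∀ g : G, ∃ x : X, ∀ y : X, dist (g • x) x ≤ dist (g • y) y)
    (G₀ : Subgroup G) {k k₀ : ℕ}
    (hG : HasRank G k) (hG₀ : HasRank ↥G₀ k₀) :
    G₀.FiniteIndex ↔ k = k₀ :=
  stmt5_general G₀ hG hG₀
end
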